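/- Let η ∈ (0,4] with η ∉ {1/2, 1}, set Y(y) = y^{1/η} for y > 0, and let U = (0,∞) × (0,∞) ⊆ ℝ². The set of triples (a,b,c) of smooth real-valued functions on U satisfying the system ∂_y a = 0; (Y+x)·∂_x a + (Y+x)·∂_y b + 2a + Y′·b = 0; (Y+x)·∂_x b + (Y+x)·∂_y c + b + 2Y′·c = 0; ∂_x c = 0 is a real vector space of dimension exactly 2. -/

import Mathlib

noncomputable section

/-- The partial derivative of `f : ℝ² → ℝ` in the `i`-th coordinate direction
(`0 ↦ x`, `1 ↦ y`). -/
def pd (i : Fin 2) (f : ℝ × ℝ → ℝ) (p : ℝ × ℝ) : ℝ :=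
  fderiv ℝ f p (if i = 0 then ((1 : ℝ), (0 : ℝ)) else ((0 : ℝ), (1 : ℝ)))

/-- `(a,b,c)` is a smooth solution on `U = (0,∞)×(0,∞)` of the system of PDEs expressing
that `F = a p₁² + b p₁p₂ + c p₂²` is an integral of the geodesic flow of
`ds² = 2(Y(y)+x)dxdy` with `Y(y) = y^{1/η}` (case 3c). -/
def Sol3c (η : ℝ) (a b c : ℝ × ℝ → ℝ) : Prop :=
  ContDiffOn ℝ (⊤ : ℕ∞) a (Set.Ioi 0 ×ˢ Set.Ioi 0) ∧
  ContDiffOn ℝ (⊤ : ℕ∞) b (Set.Ioi 0 ×ˢ Set.Ioi 0) ∧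
  ContDiffOn ℝ (⊤ : ℕ∞) c (Set.Ioi 0 ×ˢ Set.Ioi 0) ∧
  ∀ p ∈ (Set.Ioi 0 ×ˢ Set.Ioi 0 : Set (ℝ × ℝ)),
    pd 1 a p = 0 ∧
    (p.2 ^ (1/η) + p.1) * pd 0 a p + (p.2 ^ (1/η) + p.1) * pd 1 b p
      + 2 * a p + deriv (fun t : ℝ => t ^ (1/η)) p.2 * b p = 0 ∧
    (p.2 ^ (1/η) + p.1) * pd 0 b p + (p.2 ^ (1/η) + p.1) * pd 1 c p
      + b p + 2 * deriv (fun t : ℝ => t ^ (1/η)) p.2 * c p = 0 ∧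
    pd 0 c p = 0

/-!
The first and last equations say that `a` depends only on `x` and `c` only on `y`. In terms of
`B = (Y + x) b` the two middle equations prescribe `∂_y B` and `∂_x B`, and the symmetry of the
mixed partials of `B` yields one equation in separated variables,
`(Y + x) (a'' - c'') + 3 a' = 3 Y' c' + 2 Y'' c`.
Comparing it at two values of `y` shows that `a''` is affine in `x`; comparing then the powers of
`x` gives `a' = m x + n`, `c'' = 4 m` and `3 Y' c' + 2 Y'' c = 3 n - 3 m Y`. For `Y = y ^ s` with
`s = 1/η ∉ {0, 1, 2}` the functions `y ^ s, y ^ (s - 1), y ^ (s - 2), 1` are linearly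
independent, which forces `m = n = 0` and `c = 0`. Hence `a` is a constant `κ` and
`B = β - 2 κ y`: the solutions form the two-parameter family `(κ, (β - 2 κ y) / (Y + x), 0)`.
-/

open Set Filter Topology
open scoped ContDiff

theorem exists_eq_add_of_hasDerivAt {f g f' : ℝ → ℝ} (hf : ∀ x > 0, HasDerivAt f (f' x) x)
    (hg : ∀ x > 0, HasDerivAt g (f' x) x) : ∃ C, ∀ x > 0, f x = g x + C := by
  obtain ⟨C, hC⟩ := isOpen_Ioi.exists_eq_add_of_deriv_eq isPreconnected_Ioi
    (fun x hx => (hf x hx).differentiableAt.differentiableWithinAt)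
    (fun x hx => (hg x hx).differentiableAt.differentiableWithinAt)
    (fun x hx => (hf x hx).deriv.trans (hg x hx).deriv.symm)
  exact ⟨C, fun x hx => hC hx⟩

theorem eq_add_mul_sub_one_of_hasDerivAt {f : ℝ → ℝ} {k x : ℝ}
    (hf : ∀ x > 0, HasDerivAt f k x) (hx : 0 < x) : f x = f 1 + k * (x - 1) := by
  obtain ⟨C, hC⟩ := exists_eq_add_of_hasDerivAt hf fun x _ => by
    simpa using (hasDerivAt_id x).const_mul k
  rw [hC x hx, hC 1 one_pos]
  ring

theorem hasDerivAt_quadratic (a b x : ℝ) :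
    HasDerivAt (fun x => a * x ^ 2 + b * x) (2 * a * x + b) x :=
  (((hasDerivAt_pow 2 x).const_mul a).fun_add ((hasDerivAt_id' x).const_mul b)).congr_deriv
    (by push_cast; ring)

theorem ContDiffOn.hasDerivAt_deriv {φ : ℝ → ℝ} {s : Set ℝ} {x : ℝ}
    (hφ : ContDiffOn ℝ ∞ φ s) (hs : IsOpen s) (hx : x ∈ s) : HasDerivAt φ (deriv φ x) x :=
  ((hφ.differentiableOn (by simp)) x hx).differentiableAt (hs.mem_nhds hx) |>.hasDerivAt

theorem ContDiffOn.hasDerivAt_deriv_deriv {φ : ℝ → ℝ} {s : Set ℝ} {x : ℝ}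
    (hφ : ContDiffOn ℝ ∞ φ s) (hs : IsOpen s) (hx : x ∈ s) :
    HasDerivAt (deriv φ) (deriv (deriv φ) x) x :=
  (hφ.deriv_of_isOpen hs le_rfl).hasDerivAt_deriv hs hx

theorem eq_zero_of_forall_quadratic_eq_zero {A B C : ℝ}
    (h : ∀ x > 0, A * x ^ 2 + B * x + C = 0) : A = 0 ∧ B = 0 ∧ C = 0 := by
  have h1 := h 1 one_pos
  have h2 := h 2 two_pos
  have h3 := h 3 three_pos
  refine ⟨?_, ?_, ?_⟩
  · linear_combination (h1 - 2 * h2 + h3) / 2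
  · linear_combination (-5 * h1 + 8 * h2 - 3 * h3) / 2
  · linear_combination 3 * h1 - 3 * h2 + h3

theorem eq_zero_of_forall_sum_mul_rpow_eq_zero {n : ℕ} {e : Fin n → ℝ}
    (he : Function.Injective e) {A : Fin n → ℝ} (h : ∀ y > 0, ∑ i, A i * y ^ e i = 0) :
    A = 0 := by
  have hv : Function.Injective fun i => (2 : ℝ) ^ e i :=
    (Real.strictMono_rpow_of_base_gt_one one_lt_two).injective.comp he
  refine Matrix.eq_zero_of_vecMul_eq_zero (Matrix.det_vandermonde_ne_zero_iff.2 hv)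
    (funext fun k => ?_)
  -- at `y = 2 ^ k` the hypothesis is the Vandermonde system with the distinct nodes `2 ^ e i`
  have hpow : ∀ i, ((2 : ℝ) ^ e i) ^ (k : ℕ) = ((2 : ℝ) ^ (k : ℕ)) ^ e i := fun i => by
    rw [← Real.rpow_natCast, ← Real.rpow_natCast, ← Real.rpow_mul zero_le_two,
      ← Real.rpow_mul zero_le_two, mul_comm]
  simpa [Matrix.vecMul, dotProduct, Matrix.vandermonde_apply, hpow] using
    h (2 ^ (k : ℕ)) (by positivity)

theorem eq_zero_of_forall_rpow_combination_eq_zero {s : ℝ} (hs : s ≠ 0) (hs1 : s ≠ 1)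
    (hs2 : s ≠ 2) {A B C D : ℝ}
    (h : ∀ y > 0, A * y ^ s + B * y ^ (s - 1) + C * y ^ (s - 2) + D = 0) :
    A = 0 ∧ B = 0 ∧ C = 0 ∧ D = 0 := by
  have h₁ : s - 1 ≠ 0 := sub_ne_zero.2 hs1
  have h₂ : s - 2 ≠ 0 := sub_ne_zero.2 hs2
  have he : Function.Injective ![s, s - 1, s - 2, 0] := by
    intro i j hij
    fin_cases i <;> fin_cases j <;>
      simp [hs, h₁, h₂, hs.symm, h₁.symm, h₂.symm] at hij ⊢ <;> linarith
  have hA := eq_zero_of_forall_sum_mul_rpow_eq_zero he (A := ![A, B, C, D]) fun y hy => by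
    simpa [Fin.sum_univ_four] using h y hy
  exact ⟨congrFun hA 0, congrFun hA 1, congrFun hA 2, congrFun hA 3⟩

theorem separation_of_variables {Y G R u u' : ℝ → ℝ}
    (hY : ∃ y₁ > 0, ∃ y₂ > 0, Y y₁ ≠ Y y₂) (hu : ∀ x > 0, HasDerivAt u (u' x) x)
    (h : ∀ x > 0, ∀ y > 0, (Y y + x) * (u' x - G y) + 3 * u x = R y) :
    ∃ m n, (∀ x > 0, u x = m * x + n) ∧
      ∀ y > 0, G y = 4 * m ∧ R y = 3 * n - 3 * m * Y y := by
  obtain ⟨y₁, hy₁, y₂, hy₂, hY₁₂⟩ := hY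
  have hdY : Y y₁ - Y y₂ ≠ 0 := sub_ne_zero.2 hY₁₂
  -- the difference of the equations at `y₁` and `y₂` no longer involves `u`
  obtain ⟨k, m, hu'⟩ : ∃ k m, ∀ x > 0, u' x = k * x + m :=
    ⟨(G y₁ - G y₂) / (Y y₁ - Y y₂),
      (Y y₁ * G y₁ - Y y₂ * G y₂ + R y₁ - R y₂) / (Y y₁ - Y y₂),
      fun x hx => by
        field_simp
        linear_combination h x hx y₁ hy₁ - h x hx y₂ hy₂⟩
  obtain ⟨n, hn⟩ := exists_eq_add_of_hasDerivAt (g := fun x => k / 2 * x ^ 2 + m * x) hu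
    fun x hx => by
      convert hasDerivAt_quadratic (k / 2) m x using 1
      rw [hu' x hx]
      ring
  have hcoeff : ∀ y > 0, 5 / 2 * k = 0 ∧ k * Y y + 4 * m - G y = 0 ∧
      Y y * (m - G y) + 3 * n - R y = 0 := fun y hy =>
    eq_zero_of_forall_quadratic_eq_zero fun x hx => by
      linear_combination h x hx y hy - (Y y + x) * hu' x hx - 3 * hn x hx
  have hk : k = 0 := by linarith [(hcoeff y₁ hy₁).1]
  refine ⟨m, n, fun x hx => by simp [hn x hx, hk], fun y hy => ?_⟩
  obtain ⟨-, hG, hR⟩ := hcoeff y hy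
  rw [hk] at hG
  exact ⟨by linear_combination -hG, by linear_combination -hR + Y y * hG⟩

theorem eq_zero_of_compatibility {s : ℝ} (hs : 0 < s) (hs1 : s ≠ 1) (hs2 : s ≠ 2)
    {u u' g g' g'' : ℝ → ℝ} (hu : ∀ x > 0, HasDerivAt u (u' x) x)
    (hg : ∀ y > 0, HasDerivAt g (g' y) y) (hg' : ∀ y > 0, HasDerivAt g' (g'' y) y)
    (h : ∀ x > 0, ∀ y > 0, (y ^ s + x) * (u' x - g'' y) + 3 * u x
      = 3 * s * y ^ (s - 1) * g' y + 2 * s * (s - 1) * y ^ (s - 2) * g y) :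
    (∀ x > 0, u x = 0) ∧ ∀ y > 0, g y = 0 := by
  have hY : ∃ y₁ > (0 : ℝ), ∃ y₂ > (0 : ℝ), y₁ ^ s ≠ y₂ ^ s :=
    ⟨2, two_pos, 1, one_pos, by rw [Real.one_rpow]; exact (Real.one_lt_rpow one_lt_two hs).ne'⟩
  obtain ⟨m, n, hu_eq, hsep⟩ := separation_of_variables hY hu h
  obtain ⟨ν, hν⟩ := exists_eq_add_of_hasDerivAt (g := fun y => 4 * m * y) hg' fun y hy => by
    simpa [(hsep y hy).1] using (hasDerivAt_id y).const_mul (4 * m)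
  obtain ⟨ρ, hρ⟩ := exists_eq_add_of_hasDerivAt (g := fun y => 2 * m * y ^ 2 + ν * y) hg
    fun y hy => by
      convert hasDerivAt_quadratic (2 * m) ν y using 1
      rw [hν y hy]
      ring
  obtain ⟨hm, hν₀, hρ₀, hn⟩ := eq_zero_of_forall_rpow_combination_eq_zero hs.ne' hs1 hs2
    (A := m * (4 * s ^ 2 + 8 * s + 3)) (B := s * (2 * s + 1) * ν) (C := 2 * s * (s - 1) * ρ)
    (D := -3 * n) fun y hy => by
      have e₁ : y ^ (s - 1) * y = y ^ s := by
        rw [← Real.rpow_add_one hy.ne']; norm_num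
      have e₂ : y ^ (s - 2) * y = y ^ (s - 1) := by
        rw [← Real.rpow_add_one hy.ne']; ring_nf
      have hR := (hsep y hy).2
      rw [hν y hy, hρ y hy] at hR
      linear_combination hR - (2 * s * (s - 1) * ν + 4 * m * s * (s - 1) * y) * e₂
        - (4 * m * s * (s - 1) + 12 * m * s) * e₁
  have hs₀ : s * (2 * s + 1) ≠ 0 := by positivity
  have hs₁ : 2 * s * (s - 1) ≠ 0 := mul_ne_zero (by positivity) (sub_ne_zero.2 hs1)
  replace hm : m = 0 := (mul_eq_zero.1 hm).resolve_right (by positivity)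
  replace hν₀ : ν = 0 := (mul_eq_zero.1 hν₀).resolve_left hs₀
  replace hρ₀ : ρ = 0 := (mul_eq_zero.1 hρ₀).resolve_left hs₁
  replace hn : n = 0 := by linarith
  exact ⟨fun x hx => by simp [hu_eq x hx, hm, hn],
    fun y hy => by simp [hρ y hy, hm, hν₀, hρ₀]⟩

section PartialDerivative

variable {f g : ℝ × ℝ → ℝ} {p : ℝ × ℝ} {x y v : ℝ}

theorem hasDerivAt_pd_zero (hf : DifferentiableAt ℝ f (x, y)) :
    HasDerivAt (fun t => f (t, y)) (pd 0 f (x, y)) x := by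
  simpa [pd, Function.comp_def] using
    hf.hasFDerivAt.comp_hasDerivAt x ((hasDerivAt_id x).prodMk (hasDerivAt_const x y))

theorem hasDerivAt_pd_one (hf : DifferentiableAt ℝ f (x, y)) :
    HasDerivAt (fun t => f (x, t)) (pd 1 f (x, y)) y := by
  simpa [pd, Function.comp_def] using
    hf.hasFDerivAt.comp_hasDerivAt y ((hasDerivAt_const y x).prodMk (hasDerivAt_id y))

theorem pd_zero_eq_of_hasDerivAt (hf : DifferentiableAt ℝ f (x, y))
    (h : HasDerivAt (fun t => f (t, y)) v x) : pd 0 f (x, y) = v :=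
  (hasDerivAt_pd_zero hf).unique h

theorem pd_one_eq_of_hasDerivAt (hf : DifferentiableAt ℝ f (x, y))
    (h : HasDerivAt (fun t => f (x, t)) v y) : pd 1 f (x, y) = v :=
  (hasDerivAt_pd_one hf).unique h

theorem Filter.EventuallyEq.pd_eq (h : f =ᶠ[𝓝 p] g) (i : Fin 2) : pd i f p = pd i g p := by
  rw [pd, pd, h.fderiv_eq]

theorem pd_const (i : Fin 2) (c : ℝ) : pd i (fun _ => c) p = 0 := by
  simp [pd]

theorem ContDiffOn.pd {s : Set (ℝ × ℝ)} (hf : ContDiffOn ℝ ∞ f s) (hs : IsOpen s)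
    (i : Fin 2) : ContDiffOn ℝ ∞ (pd i f) s :=
  (ContinuousLinearMap.apply ℝ ℝ _).contDiff.comp_contDiffOn
    (hf.fderiv_of_isOpen hs le_rfl)

theorem pd_zero_pd_one_comm (hf : ContDiffAt ℝ 2 f p) : pd 0 (pd 1 f) p = pd 1 (pd 0 f) p := by
  have h2 : HasFDerivAt (fderiv ℝ f) (fderiv ℝ (fderiv ℝ f) p) p :=
    ((hf.fderiv_right (m := 1) le_rfl).differentiableAt one_ne_zero).hasFDerivAt
  have hpd : ∀ i j : Fin 2, pd j (pd i f) p = fderiv ℝ (fderiv ℝ f) p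
      (if j = 0 then (1, 0) else (0, 1)) (if i = 0 then (1, 0) else (0, 1)) := fun i j => by
    have hcomp : pd i f = ContinuousLinearMap.apply ℝ ℝ
        (if i = 0 then ((1 : ℝ), (0 : ℝ)) else (0, 1)) ∘ fderiv ℝ f := rfl
    rw [pd, hcomp, ((ContinuousLinearMap.apply ℝ ℝ _).hasFDerivAt.comp p h2).fderiv]
    rfl
  rw [hpd, hpd]
  exact (hf.isSymmSndFDerivAt (by simp)).eq _ _

end PartialDerivative

section Quadrant

variable {f : ℝ × ℝ → ℝ} {x y k : ℝ}

theorem ContDiffOn.contDiffAt_of_pos (hf : ContDiffOn ℝ ∞ f (Ioi 0 ×ˢ Ioi 0)) (hx : 0 < x)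
    (hy : 0 < y) : ContDiffAt ℝ ∞ f (x, y) :=
  hf.contDiffAt ((isOpen_Ioi.prod isOpen_Ioi).mem_nhds ⟨hx, hy⟩)

theorem ContDiffOn.differentiableAt_of_pos (hf : ContDiffOn ℝ ∞ f (Ioi 0 ×ˢ Ioi 0))
    (hx : 0 < x) (hy : 0 < y) : DifferentiableAt ℝ f (x, y) :=
  (hf.contDiffAt_of_pos hx hy).differentiableAt (by simp)

theorem eq_add_mul_of_pd_zero_eq (hf : ∀ t > 0, DifferentiableAt ℝ f (t, y))
    (h : ∀ t > 0, pd 0 f (t, y) = k) (hx : 0 < x) : f (x, y) = f (1, y) + k * (x - 1) :=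
  eq_add_mul_sub_one_of_hasDerivAt (f := fun t => f (t, y))
    (fun t ht => h t ht ▸ hasDerivAt_pd_zero (hf t ht)) hx

theorem eq_add_mul_of_pd_one_eq (hf : ∀ t > 0, DifferentiableAt ℝ f (x, t))
    (h : ∀ t > 0, pd 1 f (x, t) = k) (hy : 0 < y) : f (x, y) = f (x, 1) + k * (y - 1) :=
  eq_add_mul_sub_one_of_hasDerivAt (f := fun t => f (x, t))
    (fun t ht => h t ht ▸ hasDerivAt_pd_one (hf t ht)) hy

theorem contDiffOn_weight (s : ℝ) :
    ContDiffOn ℝ ∞ (fun q : ℝ × ℝ => q.2 ^ s + q.1) (Ioi 0 ×ˢ Ioi 0) :=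
  (contDiff_snd.contDiffOn.rpow_const_of_ne fun _ hq => hq.2.ne').add contDiff_fst.contDiffOn

theorem pd_zero_weight_mul {s : ℝ} (hx : 0 < x) (hy : 0 < y)
    (hf : DifferentiableAt ℝ f (x, y)) :
    pd 0 (fun q => (q.2 ^ s + q.1) * f q) (x, y) = f (x, y) + (y ^ s + x) * pd 0 f (x, y) :=
  pd_zero_eq_of_hasDerivAt
    (((contDiffOn_weight s).differentiableAt_of_pos hx hy).mul hf)
    ((((hasDerivAt_id x).const_add (y ^ s)).mul (hasDerivAt_pd_zero hf)).congr_deriv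
      (by simp))

theorem pd_one_weight_mul {s : ℝ} (hx : 0 < x) (hy : 0 < y)
    (hf : DifferentiableAt ℝ f (x, y)) :
    pd 1 (fun q => (q.2 ^ s + q.1) * f q) (x, y)
      = s * y ^ (s - 1) * f (x, y) + (y ^ s + x) * pd 1 f (x, y) :=
  pd_one_eq_of_hasDerivAt
    (((contDiffOn_weight s).differentiableAt_of_pos hx hy).mul hf)
    ((((Real.hasDerivAt_rpow_const (Or.inl hy.ne')).add_const x).mul
      (hasDerivAt_pd_one hf)))

end Quadrant

-- `b`-coefficient of the integral `κ (p₁² - 2 y H) + β H`, `H = p₁ p₂ / (Y + x)` the Hamiltonian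
def solutionB (η κ β : ℝ) (p : ℝ × ℝ) : ℝ :=
  (β - 2 * κ * p.2) / (p.2 ^ (1 / η) + p.1)

theorem sol3c_solutionB {η : ℝ} (κ β : ℝ) :
    Sol3c η (fun _ => κ) (solutionB η κ β) (fun _ => 0) := by
  have hb : ContDiffOn ℝ ∞ (solutionB η κ β) (Ioi 0 ×ˢ Ioi 0) :=
    (contDiff_const.sub (contDiff_const.mul contDiff_snd)).contDiffOn.div (contDiffOn_weight _)
      fun q hq => (add_pos (Real.rpow_pos_of_pos hq.2 _) hq.1).ne'
  refine ⟨contDiffOn_const, hb, contDiffOn_const, ?_⟩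
  rintro ⟨x, y⟩ ⟨hx : 0 < x, hy : 0 < y⟩
  have hB : (fun q => (q.2 ^ (1 / η) + q.1) * solutionB η κ β q) =ᶠ[𝓝 (x, y)]
      fun q => β - 2 * κ * q.2 :=
    eventually_of_mem ((isOpen_Ioi.prod isOpen_Ioi).mem_nhds ⟨hx, hy⟩) fun q hq =>
      mul_div_cancel₀ _ (add_pos (Real.rpow_pos_of_pos hq.2 _) hq.1).ne'
  have hbd := hb.differentiableAt_of_pos hx hy
  have h₁ := pd_one_weight_mul (s := 1 / η) hx hy hbd
  have h₀ := pd_zero_weight_mul (s := 1 / η) hx hy hbd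
  rw [hB.pd_eq, pd_one_eq_of_hasDerivAt (by fun_prop)
    (((hasDerivAt_id y).const_mul (2 * κ)).const_sub β)] at h₁
  rw [hB.pd_eq, pd_zero_eq_of_hasDerivAt (by fun_prop)
    (hasDerivAt_const x (β - 2 * κ * y))] at h₀
  simp only [pd_const, Real.deriv_rpow_const]
  exact ⟨trivial, by linear_combination -h₁, by linear_combination -h₀, trivial⟩

namespace Sol3c

variable {η x y : ℝ} {a b c : ℝ × ℝ → ℝ}

theorem pd_one_weight_mul (h : Sol3c η a b c) (hx : 0 < x) (hy : 0 < y) :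
    pd 1 (fun q => (q.2 ^ (1 / η) + q.1) * b q) (x, y)
      = -((y ^ (1 / η) + x) * pd 0 a (x, y) + 2 * a (x, y)) := by
  have h₂ := (h.2.2.2 (x, y) ⟨hx, hy⟩).2.1
  rw [Real.deriv_rpow_const] at h₂
  rw [_root_.pd_one_weight_mul hx hy (h.2.1.differentiableAt_of_pos hx hy)]
  linear_combination h₂

theorem pd_zero_weight_mul (h : Sol3c η a b c) (hx : 0 < x) (hy : 0 < y) :
    pd 0 (fun q => (q.2 ^ (1 / η) + q.1) * b q) (x, y)
      = -((y ^ (1 / η) + x) * pd 1 c (x, y) + 2 * (1 / η * y ^ (1 / η - 1)) * c (x, y)) := by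
  have h₃ := (h.2.2.2 (x, y) ⟨hx, hy⟩).2.2.1
  rw [Real.deriv_rpow_const] at h₃
  rw [_root_.pd_zero_weight_mul hx hy (h.2.1.differentiableAt_of_pos hx hy)]
  linear_combination h₃

theorem a_eq (h : Sol3c η a b c) (hx : 0 < x) (hy : 0 < y) : a (x, y) = a (x, 1) := by
  simpa using eq_add_mul_of_pd_one_eq (k := 0) (fun t ht => h.1.differentiableAt_of_pos hx ht)
    (fun t ht => (h.2.2.2 (x, t) ⟨hx, ht⟩).1) hy

theorem c_eq (h : Sol3c η a b c) (hx : 0 < x) (hy : 0 < y) : c (x, y) = c (1, y) := by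
  simpa using eq_add_mul_of_pd_zero_eq (k := 0)
    (fun t ht => h.2.2.1.differentiableAt_of_pos ht hy)
    (fun t ht => (h.2.2.2 (t, y) ⟨ht, hy⟩).2.2.2) hx

theorem contDiffOn_a_slice (h : Sol3c η a b c) : ContDiffOn ℝ ∞ (fun t => a (t, 1)) (Ioi 0) :=
  h.1.comp (contDiff_id.prodMk contDiff_const).contDiffOn fun _ ht => ⟨ht, mem_Ioi.2 one_pos⟩

theorem contDiffOn_c_slice (h : Sol3c η a b c) : ContDiffOn ℝ ∞ (fun t => c (1, t)) (Ioi 0) :=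
  h.2.2.1.comp (contDiff_const.prodMk contDiff_id).contDiffOn
    fun _ ht => ⟨mem_Ioi.2 one_pos, ht⟩

theorem pd_zero_a_eq_deriv (h : Sol3c η a b c) (hx : 0 < x) (hy : 0 < y) :
    pd 0 a (x, y) = deriv (fun t => a (t, 1)) x :=
  ((hasDerivAt_pd_zero (h.1.differentiableAt_of_pos hx hy)).congr_of_eventuallyEq
    (eventually_of_mem (Ioi_mem_nhds hx) fun _ ht => (h.a_eq ht hy).symm)).deriv.symm

theorem pd_one_c_eq_deriv (h : Sol3c η a b c) (hx : 0 < x) (hy : 0 < y) :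
    pd 1 c (x, y) = deriv (fun t => c (1, t)) y :=
  ((hasDerivAt_pd_one (h.2.2.1.differentiableAt_of_pos hx hy)).congr_of_eventuallyEq
    (eventually_of_mem (Ioi_mem_nhds hy) fun _ ht => (h.c_eq hx ht).symm)).deriv.symm

theorem contDiffOn_weight_mul (h : Sol3c η a b c) :
    ContDiffOn ℝ ∞ (fun q => (q.2 ^ (1 / η) + q.1) * b q) (Ioi 0 ×ˢ Ioi 0) :=
  (contDiffOn_weight _).mul h.2.1

theorem pd_zero_pd_one_weight_mul (h : Sol3c η a b c) (hx : 0 < x) (hy : 0 < y) :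
    pd 0 (pd 1 (fun q => (q.2 ^ (1 / η) + q.1) * b q)) (x, y)
      = -(3 * deriv (fun t => a (t, 1)) x
        + (y ^ (1 / η) + x) * deriv (deriv fun t => a (t, 1)) x) := by
  have hα := h.contDiffOn_a_slice
  have hslice : HasDerivAt
      (fun t => -((y ^ (1 / η) + t) * deriv (fun t => a (t, 1)) t + 2 * a (t, 1)))
      (-(3 * deriv (fun t => a (t, 1)) x
        + (y ^ (1 / η) + x) * deriv (deriv fun t => a (t, 1)) x)) x :=
    ((((hasDerivAt_id' x).const_add _).fun_mul (hα.hasDerivAt_deriv_deriv isOpen_Ioi hx)).fun_add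
      ((hα.hasDerivAt_deriv isOpen_Ioi hx).const_mul 2)).fun_neg.congr_deriv (by ring)
  refine pd_zero_eq_of_hasDerivAt
    ((h.contDiffOn_weight_mul.pd (isOpen_Ioi.prod isOpen_Ioi) 1).differentiableAt_of_pos hx hy)
    (hslice.congr_of_eventuallyEq (eventually_of_mem (Ioi_mem_nhds hx) fun t ht => ?_))
  simp only [h.pd_one_weight_mul ht hy, h.pd_zero_a_eq_deriv ht hy, h.a_eq ht hy]

theorem pd_one_pd_zero_weight_mul (h : Sol3c η a b c) (hx : 0 < x) (hy : 0 < y) :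
    pd 1 (pd 0 (fun q => (q.2 ^ (1 / η) + q.1) * b q)) (x, y)
      = -(3 * (1 / η) * y ^ (1 / η - 1) * deriv (fun t => c (1, t)) y
        + (y ^ (1 / η) + x) * deriv (deriv fun t => c (1, t)) y
        + 2 * (1 / η) * (1 / η - 1) * y ^ (1 / η - 2) * c (1, y)) := by
  have hγ := h.contDiffOn_c_slice
  have hY := Real.hasDerivAt_rpow_const (x := y) (p := 1 / η) (Or.inl hy.ne')
  have hY' := Real.hasDerivAt_rpow_const (x := y) (p := 1 / η - 1) (Or.inl hy.ne')
  have hslice : HasDerivAt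
      (fun t => -((t ^ (1 / η) + x) * deriv (fun t => c (1, t)) t
        + 2 * (1 / η) * t ^ (1 / η - 1) * c (1, t)))
      (-(3 * (1 / η) * y ^ (1 / η - 1) * deriv (fun t => c (1, t)) y
        + (y ^ (1 / η) + x) * deriv (deriv fun t => c (1, t)) y
        + 2 * (1 / η) * (1 / η - 1) * y ^ (1 / η - 2) * c (1, y))) y := by
    refine (((hY.add_const x).fun_mul (hγ.hasDerivAt_deriv_deriv isOpen_Ioi hy)).fun_add
      ((hY'.const_mul (2 * (1 / η))).fun_mul
        (hγ.hasDerivAt_deriv isOpen_Ioi hy))).fun_neg.congr_deriv ?_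
    rw [show 1 / η - 1 - 1 = 1 / η - 2 by ring]
    ring
  refine pd_one_eq_of_hasDerivAt
    ((h.contDiffOn_weight_mul.pd (isOpen_Ioi.prod isOpen_Ioi) 0).differentiableAt_of_pos hx hy)
    (hslice.congr_of_eventuallyEq (eventually_of_mem (Ioi_mem_nhds hy) fun t ht => ?_))
  simp only [h.pd_zero_weight_mul hx ht, h.pd_one_c_eq_deriv hx ht, h.c_eq hx ht]
  ring

theorem compatibility (h : Sol3c η a b c) (hx : 0 < x) (hy : 0 < y) :
    (y ^ (1 / η) + x) * (deriv (deriv fun t => a (t, 1)) x - deriv (deriv fun t => c (1, t)) y)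
        + 3 * deriv (fun t => a (t, 1)) x
      = 3 * (1 / η) * y ^ (1 / η - 1) * deriv (fun t => c (1, t)) y
        + 2 * (1 / η) * (1 / η - 1) * y ^ (1 / η - 2) * c (1, y) := by
  have hsymm := pd_zero_pd_one_comm
    ((h.contDiffOn_weight_mul.contDiffAt_of_pos hx hy).of_le (by norm_cast))
  rw [h.pd_zero_pd_one_weight_mul hx hy, h.pd_one_pd_zero_weight_mul hx hy] at hsymm
  linear_combination -hsymm

theorem deriv_a_slice_eq_zero_and_c_slice_eq_zero (hη : 0 < η) (hη2 : η ≠ 1 / 2)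
    (hη1 : η ≠ 1) (h : Sol3c η a b c) :
    (∀ x > 0, deriv (fun t => a (t, 1)) x = 0) ∧ ∀ y > 0, c (1, y) = 0 := by
  have hs1 : 1 / η ≠ 1 := by rwa [ne_eq, div_eq_one_iff_eq hη.ne', eq_comm]
  have hs2 : 1 / η ≠ 2 := by rwa [ne_eq, one_div, inv_eq_iff_eq_inv, ← one_div]
  have hα := h.contDiffOn_a_slice
  have hγ := h.contDiffOn_c_slice
  exact eq_zero_of_compatibility (by positivity) hs1 hs2
    (fun x hx => hα.hasDerivAt_deriv_deriv isOpen_Ioi hx)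
    (fun y hy => hγ.hasDerivAt_deriv isOpen_Ioi hy)
    (fun y hy => hγ.hasDerivAt_deriv_deriv isOpen_Ioi hy)
    fun x hx y hy => h.compatibility hx hy

theorem exists_eq_solutionB (hη : 0 < η) (hη2 : η ≠ 1 / 2) (hη1 : η ≠ 1)
    (h : Sol3c η a b c) :
    ∃ κ β : ℝ, ∀ p ∈ (Ioi 0 ×ˢ Ioi 0 : Set (ℝ × ℝ)),
      a p = κ ∧ b p = solutionB η κ β p ∧ c p = 0 := by
  obtain ⟨hα', hγ₀⟩ := h.deriv_a_slice_eq_zero_and_c_slice_eq_zero hη hη2 hη1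
  have ha : ∀ x > 0, ∀ y > 0, a (x, y) = a (1, 1) := fun x hx y hy => by
    rw [h.a_eq hx hy]
    simpa using eq_add_mul_sub_one_of_hasDerivAt (k := 0)
      (fun t ht => hα' t ht ▸ h.contDiffOn_a_slice.hasDerivAt_deriv isOpen_Ioi ht) hx
  have hc : ∀ x > 0, ∀ y > 0, c (x, y) = 0 := fun x hx y hy =>
    (h.c_eq hx hy).trans (hγ₀ y hy)
  have hγ'₁ : deriv (fun t => c (1, t)) 1 = 0 := by
    have : (fun t => c (1, t)) =ᶠ[𝓝 1] fun _ => 0 :=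
      eventually_of_mem (Ioi_mem_nhds one_pos) hγ₀
    rw [this.deriv_eq, deriv_const]
  have hB := h.contDiffOn_weight_mul
  have hBx : ∀ x > 0, (1 ^ (1 / η) + x) * b (x, 1)
      = (1 ^ (1 / η) + 1) * b (1, 1) + 0 * (x - 1) := fun x hx =>
    eq_add_mul_of_pd_zero_eq (fun t ht => hB.differentiableAt_of_pos ht one_pos) (fun t ht => by
      rw [h.pd_zero_weight_mul ht one_pos, h.pd_one_c_eq_deriv ht one_pos, hγ'₁,
        hc t ht 1 one_pos]
      ring) hx
  have hBy : ∀ x > 0, ∀ y > 0, (y ^ (1 / η) + x) * b (x, y)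
      = (1 ^ (1 / η) + x) * b (x, 1) + -2 * a (1, 1) * (y - 1) := fun x hx y hy =>
    eq_add_mul_of_pd_one_eq (fun t ht => hB.differentiableAt_of_pos hx ht) (fun t ht => by
      rw [h.pd_one_weight_mul hx ht, h.pd_zero_a_eq_deriv hx ht, hα' x hx, ha x hx t ht]
      ring) hy
  refine ⟨a (1, 1), (1 ^ (1 / η) + 1) * b (1, 1) + 2 * a (1, 1), ?_⟩
  rintro ⟨x, y⟩ ⟨hx : 0 < x, hy : 0 < y⟩
  refine ⟨ha x hx y hy, ?_, hc x hx y hy⟩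
  rw [solutionB, eq_div_iff (by positivity), mul_comm]
  linear_combination hBy x hx y hy + hBx x hx

end Sol3c

/-- For `η ∈ (0,4]`, `η ∉ {1/2, 1}`, the space of quadratic-in-momenta
integrals of the geodesic flow of `ds² = 2(y^{1/η}+x)dxdy` on `(0,∞)×(0,∞)` has dimension
exactly 2. -/
theorem stmt13 (η : ℝ) (hη : η ∈ Set.Ioc (0:ℝ) 4) (hη2 : η ≠ 1/2) (hη1 : η ≠ 1) :
    ∃ a₁ b₁ c₁ a₂ b₂ c₂ : ℝ × ℝ → ℝ,
      Sol3c η a₁ b₁ c₁ ∧ Sol3c η a₂ b₂ c₂ ∧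
      (∀ t₁ t₂ : ℝ,
        (∀ p ∈ (Set.Ioi 0 ×ˢ Set.Ioi 0 : Set (ℝ × ℝ)),
          t₁ * a₁ p + t₂ * a₂ p = 0 ∧
          t₁ * b₁ p + t₂ * b₂ p = 0 ∧
          t₁ * c₁ p + t₂ * c₂ p = 0) →
        t₁ = 0 ∧ t₂ = 0) ∧
      (∀ a b c : ℝ × ℝ → ℝ, Sol3c η a b c →
        ∃ t₁ t₂ : ℝ, ∀ p ∈ (Set.Ioi 0 ×ˢ Set.Ioi 0 : Set (ℝ × ℝ)),
          a p = t₁ * a₁ p + t₂ * a₂ p ∧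
          b p = t₁ * b₁ p + t₂ * b₂ p ∧
          c p = t₁ * c₁ p + t₂ * c₂ p) := by
  refine ⟨fun _ => 1, solutionB η 1 0, fun _ => 0, fun _ => 0, solutionB η 0 1, fun _ => 0,
    sol3c_solutionB 1 0, sol3c_solutionB 0 1, fun t₁ t₂ h => ?_, fun a b c h => ?_⟩
  · obtain ⟨h₁, h₂, -⟩ := h (1, 1) ⟨mem_Ioi.2 one_pos, mem_Ioi.2 one_pos⟩
    simp only [solutionB, Real.one_rpow] at h₁ h₂
    constructor <;> linarith
  · obtain ⟨κ, β, hκβ⟩ := h.exists_eq_solutionB hη.1 hη2 hη1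
    refine ⟨κ, β, fun p hp => ?_⟩
    obtain ⟨ha, hb, hc⟩ := hκβ p hp
    rw [ha, hb, hc, solutionB, solutionB, solutionB]
    exact ⟨by ring, by ring, by ring⟩
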